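/- arXiv:1306.3611 — 4 statements merged into one kernel-verified Lean document; each statement's English description precedes it below -/
import Mathlib

section
/- Let M and M' be perfect matchings of K_{2m} and let (e₁,...,e_m) be the edges of M arranged in any order. Then M' * (e₁,...,e_m) = M, i.e., inserting the edges of M one after another into M' (in any order) produces M. -/
/-!
Insertion of a non-loop edge `e` keeps a perfect matching perfect and makes `e` one of its
edges, and it never touches an edge that is vertex-disjoint from `e`. Two edges of `M` are
equal or disjoint, so once an edge of `M` is inserted it survives all later insertions; at the
end every edge of `M` lies in the perfect matching `M' * (e₁, …, eₘ)`, which forces the two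
matchings to coincide.
-/

open SimpleGraph

/-- A simple graph on `Fin n` is a perfect matching if every vertex is
incident with exactly one edge, i.e. has a unique neighbor. -/
def IsPerfMatching {n : ℕ} (M : SimpleGraph (Fin n)) : Prop :=
  ∀ v, ∃! w, M.Adj v w

/-- A simple graph is (i.e. its edges form) a single cycle of length `n`:
there is a cycle of length `n` passing through all of its edges. -/
def IsCycleGraphOfLength {V : Type*} (G : SimpleGraph V) (n : ℕ) : Prop :=
  ∃ (v : V) (p : G.Walk v v), p.IsCycle ∧ p.length = n ∧ ∀ e ∈ G.edgeSet, e ∈ p.edges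

/-- Two perfect matchings are adjacent in the matching graph `𝒫ₘ` iff they are
distinct and their symmetric difference is a cycle of length four. -/
def MatchAdj {n : ℕ} (M₁ M₂ : SimpleGraph (Fin n)) : Prop :=
  M₁ ≠ M₂ ∧ IsCycleGraphOfLength (symmDiff M₁ M₂) 4

/-- Vertices of the graph `𝒫ₘ`: all perfect matchings of `K_{2m}`. -/
abbrev PMVertex (m : ℕ) := {M : SimpleGraph (Fin (2 * m)) // IsPerfMatching M}

/-- The graph `𝒫ₘ` of perfect matchings of `K_{2m}`. -/
def matchingGraph (m : ℕ) : SimpleGraph (PMVertex m) where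
  Adj M₁ M₂ := MatchAdj M₁.1 M₂.1
  symm := ⟨by
    rintro M₁ M₂ ⟨hne, hc⟩
    exact ⟨hne.symm, by rwa [symmDiff_comm]⟩⟩
  loopless := ⟨fun M h => h.1 rfl⟩

/-- The number of geodesics (shortest paths) between two vertices of a graph. -/
noncomputable def geodesicCount {V : Type*} (G : SimpleGraph V) (u v : V) : ℕ :=
  Nat.card {p : G.Walk u v // p.IsPath ∧ p.length = G.dist u v}
/-- The unique neighbor of `v` in a (perfect) matching `M`
(junk value `v` itself if `v` has no neighbor). -/
noncomputable def matchOf {V : Type*} (M : SimpleGraph V) (v : V) : V := by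
  classical
  exact if h : ∃ w, M.Adj v w then h.choose else v

/-- Insertion `M * e` of an edge `e = {v₁, v₂}` into a perfect matching `M`:
if `e ∈ M` then `M * e = M`; otherwise the edges `{v₁, v₃}` and `{v₂, v₄}` of `M`
incident with `v₁` and `v₂` are deleted and the edges `{v₁, v₂}` and `{v₃, v₄}`
are added. -/
noncomputable def insertEdge {V : Type*} (M : SimpleGraph V) (e : Sym2 V) : SimpleGraph V := by
  classical
  exact if e ∈ M.edgeSet then M
  else SimpleGraph.fromEdgeSet
    ({f | f ∈ M.edgeSet ∧ ∀ v ∈ e, v ∉ f} ∪ {e, Sym2.map (matchOf M) e})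

/-- Iterated insertion `M * (e₁, …, eₙ) = (M * (e₁, …, eₙ₋₁)) * eₙ`. -/
noncomputable def insertEdges {V : Type*} (M : SimpleGraph V) (l : List (Sym2 V)) :
    SimpleGraph V :=
  l.foldl insertEdge M

section Insertion

variable {V : Type*}

lemma matchOf_adj {N : SimpleGraph V} (hN : ∀ v, ∃! w, N.Adj v w) (v : V) :
    N.Adj v (matchOf N v) := by
  have h : ∃ w, N.Adj v w := (hN v).exists
  rw [matchOf, dif_pos h]
  exact h.choose_spec

lemma adj_iff_eq_matchOf {N : SimpleGraph V} (hN : ∀ v, ∃! w, N.Adj v w) {v w : V} :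
    N.Adj v w ↔ w = matchOf N v :=
  ⟨fun h => (hN v).unique h (matchOf_adj hN v), fun h => h ▸ matchOf_adj hN v⟩

lemma insertEdge_adj_of_not_mem {N : SimpleGraph V} {a b : V} (h : s(a, b) ∉ N.edgeSet)
    (v w : V) :
    (insertEdge N s(a, b)).Adj v w ↔
      ((N.Adj v w ∧ v ≠ a ∧ w ≠ a ∧ v ≠ b ∧ w ≠ b) ∨
        s(v, w) = s(a, b) ∨ s(v, w) = s(matchOf N a, matchOf N b)) ∧ v ≠ w := by
  rw [insertEdge, if_neg h]
  simp only [fromEdgeSet_adj, Set.mem_union, Set.mem_ofPred_eq, mem_edgeSet, Sym2.mem_iff,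
    Set.mem_insert_iff, Set.mem_singleton_iff, Sym2.map_mk]
  grind

lemma insertEdge_unique_adj {N : SimpleGraph V} (hN : ∀ v, ∃! w, N.Adj v w)
    {e : Sym2 V} (he : ¬ e.IsDiag) :
    ∀ v, ∃! w, (insertEdge N e).Adj v w := by
  induction e using Sym2.inductionOn with | _ a b =>
  by_cases hab : s(a, b) ∈ N.edgeSet
  · rwa [insertEdge, if_pos hab]
  -- `matchOf N` is a fixed-point-free involution; that is all `grind` needs in the cases below.
  have hinv : ∀ v, matchOf N (matchOf N v) = v := fun v =>
    ((adj_iff_eq_matchOf hN).1 (matchOf_adj hN v).symm).symm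
  have hne : ∀ v, matchOf N v ≠ v := fun v => (matchOf_adj hN v).ne.symm
  rw [Sym2.mk_isDiag_iff] at he
  intro v
  simp only [insertEdge_adj_of_not_mem hab, adj_iff_eq_matchOf hN, Sym2.eq_iff]
  by_cases hva : v = a
  · subst hva; refine ⟨b, by grind, by grind⟩
  by_cases hvb : v = b
  · subst hvb; refine ⟨a, by grind, by grind⟩
  by_cases hvc : v = matchOf N a
  · subst hvc; refine ⟨matchOf N b, by grind, by grind⟩
  by_cases hvd : v = matchOf N b
  · subst hvd; refine ⟨matchOf N a, by grind, by grind⟩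
  exact ⟨matchOf N v, by grind, by grind⟩

lemma mem_insertEdge_of_mem {N : SimpleGraph V} {e f : Sym2 V} (hf : f ∈ N.edgeSet)
    (hef : e = f ∨ ∀ v ∈ e, v ∉ f) : f ∈ (insertEdge N e).edgeSet := by
  by_cases he : e ∈ N.edgeSet
  · rwa [insertEdge, if_pos he]
  rw [insertEdge, if_neg he, edgeSet_fromEdgeSet]
  refine ⟨?_, N.not_isDiag_of_mem_edgeSet hf⟩
  rcases hef with rfl | hdisj
  · exact absurd hf he
  · exact Or.inl ⟨hf, hdisj⟩

lemma self_mem_insertEdge (N : SimpleGraph V) {e : Sym2 V} (he : ¬ e.IsDiag) :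
    e ∈ (insertEdge N e).edgeSet := by
  by_cases hN : e ∈ N.edgeSet
  · rwa [insertEdge, if_pos hN]
  rw [insertEdge, if_neg hN, edgeSet_fromEdgeSet]
  exact ⟨Or.inr (Or.inl rfl), he⟩

lemma insertEdges_unique_adj {N : SimpleGraph V} (hN : ∀ v, ∃! w, N.Adj v w)
    {l : List (Sym2 V)} (hl : ∀ e ∈ l, ¬ e.IsDiag) :
    ∀ v, ∃! w, (insertEdges N l).Adj v w := by
  induction l generalizing N with
  | nil => exact hN
  | cons e l ih =>
    exact ih (insertEdge_unique_adj hN (hl e (by simp))) fun f hf => hl f (by simp [hf])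

lemma mem_insertEdges_of_mem {N : SimpleGraph V} {f : Sym2 V} (hf : f ∈ N.edgeSet)
    {l : List (Sym2 V)} (hl : ∀ e ∈ l, e = f ∨ ∀ v ∈ e, v ∉ f) :
    f ∈ (insertEdges N l).edgeSet := by
  induction l generalizing N with
  | nil => exact hf
  | cons e l ih =>
    exact ih (mem_insertEdge_of_mem hf (hl e (by simp))) fun e he => hl e (by simp [he])

lemma mem_insertEdges (N : SimpleGraph V) {l : List (Sym2 V)} (hdiag : ∀ e ∈ l, ¬ e.IsDiag)
    (hl : ∀ e ∈ l, ∀ f ∈ l, e = f ∨ ∀ v ∈ e, v ∉ f) {e : Sym2 V} (he : e ∈ l) :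
    e ∈ (insertEdges N l).edgeSet := by
  induction l generalizing N with
  | nil => simp at he
  | cons e' l ih =>
    rcases List.mem_cons.1 he with rfl | he
    · exact mem_insertEdges_of_mem (self_mem_insertEdge N (hdiag e (by simp)))
        fun f hf => (hl f (by simp [hf]) e (by simp))
    · exact ih _ (fun f hf => hdiag f (by simp [hf]))
        (fun f hf g hg => hl f (by simp [hf]) g (by simp [hg])) he

lemma eq_or_disjoint_of_mem_edgeSet {M : SimpleGraph V} (hM : ∀ v, ∃! w, M.Adj v w)
    {e f : Sym2 V} (he : e ∈ M.edgeSet) (hf : f ∈ M.edgeSet) : e = f ∨ ∀ v ∈ e, v ∉ f := by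
  refine or_iff_not_imp_right.2 fun h => ?_
  obtain ⟨v, hve, hvf⟩ : ∃ v ∈ e, v ∈ f := by simpa using h
  obtain ⟨x, rfl⟩ := Sym2.mem_iff_exists.1 hve
  obtain ⟨y, rfl⟩ := Sym2.mem_iff_exists.1 hvf
  rw [(hM v).unique (M.mem_edgeSet.1 he) (M.mem_edgeSet.1 hf)]

lemma eq_of_edgeSet_subset {M N : SimpleGraph V} (hM : ∀ v, ∃! w, M.Adj v w)
    (hN : ∀ v, ∃! w, N.Adj v w) (h : M.edgeSet ⊆ N.edgeSet) : N = M := by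
  have hle : M ≤ N := edgeSet_subset_edgeSet.1 h
  ext v w
  refine ⟨fun hvw => ?_, fun hvw => hle hvw⟩
  obtain ⟨u, hvu, -⟩ := hM v
  rwa [(hN v).unique hvw (hle hvu)]

end Insertion

theorem stmt2_general (m : ℕ) (M M' : SimpleGraph (Fin (2 * m)))
    (hM : IsPerfMatching M) (hM' : IsPerfMatching M')
    (l : List (Sym2 (Fin (2 * m))))
    (hmem : ∀ e, e ∈ l ↔ e ∈ M.edgeSet) :
    insertEdges M' l = M := by
  have hdiag : ∀ e ∈ l, ¬ e.IsDiag := fun e he => M.not_isDiag_of_mem_edgeSet ((hmem e).1 he)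
  refine eq_of_edgeSet_subset hM (insertEdges_unique_adj hM' hdiag) fun e he => ?_
  exact mem_insertEdges M' hdiag
    (fun e he f hf => eq_or_disjoint_of_mem_edgeSet hM ((hmem e).1 he) ((hmem f).1 hf))
    ((hmem e).2 he)

/-- Inserting the edges of a perfect matching `M`, in any order, into any
perfect matching `M'` produces `M`. -/
theorem stmt2 (m : ℕ) (M M' : SimpleGraph (Fin (2 * m)))
    (hM : IsPerfMatching M) (hM' : IsPerfMatching M')
    (l : List (Sym2 (Fin (2 * m)))) (hnd : l.Nodup)
    (hmem : ∀ e, e ∈ l ↔ e ∈ M.edgeSet) :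
    insertEdges M' l = M :=
  stmt2_general m M M' hM hM' l hmem
end

section
/- For every m ≥ 1, the graph 𝒫_m of perfect matchings of K_{2m} is connected. -/
open SimpleGraph

/-!
Fix a perfect matching `N`. If `M ≠ N`, pick an edge `xy` of `N` missing from `M` and let `a`, `b`
be the `M`-partners of `x`, `y`. Relabelling `M` by the transposition `(a y)` trades the edges
`xa`, `yb` for `xy`, `ab`, so the new matching differs from `M` by the 4-cycle `x a b y`. Every
vertex on which `M` already agreed with `N` avoids `{a, y}` and keeps its partner, while `x` now
agrees as well, so the number of vertices where the matching disagrees with `N` strictly drops.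
-/

lemma isCycleGraphOfLength_four {V : Type*} {G : SimpleGraph V} {a b c d : V}
    (hab : a ≠ b) (hac : a ≠ c) (had : a ≠ d) (hbc : b ≠ c) (hbd : b ≠ d) (hcd : c ≠ d)
    (hG : G.edgeSet = {s(a, b), s(b, c), s(c, d), s(d, a)}) :
    IsCycleGraphOfLength G 4 := by
  have hadj (u v : V) (h : s(u, v) ∈ ({s(a, b), s(b, c), s(c, d), s(d, a)} : Set (Sym2 V))) :
      G.Adj u v := by rwa [← mem_edgeSet, hG]
  refine ⟨a, .cons (hadj a b (by simp)) (.cons (hadj b c (by simp)) (.cons (hadj c d (by simp))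
    (.cons (hadj d a (by simp)) .nil))), ?_, rfl, ?_⟩
  · rw [Walk.cons_isCycle_iff]
    simp [*, Ne.symm]
  · intro e he
    rw [hG] at he
    simpa using he

lemma SimpleGraph.reachable_of_forall_exists_adj_lt {V : Type*} {G : SimpleGraph V}
    (f : V → ℕ) {t : V} (h : ∀ v ≠ t, ∃ w, G.Adj v w ∧ f w < f v) (v : V) : G.Reachable v t := by
  induction hv : f v using Nat.strong_induction_on generalizing v with
  | _ k ih =>
    by_cases hvt : v = t
    · exact hvt ▸ .rfl
    obtain ⟨w, hvw, hlt⟩ := h v hvt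
    exact hvw.reachable.trans (ih _ (hv ▸ hlt) w rfl)

section PerfectMatching

variable {n : ℕ} {M N : SimpleGraph (Fin n)}

lemma IsPerfMatching.unique (hM : IsPerfMatching M) {v w₁ w₂ : Fin n} (h₁ : M.Adj v w₁)
    (h₂ : M.Adj v w₂) : w₁ = w₂ :=
  (hM v).unique h₁ h₂

lemma IsPerfMatching.comap_equiv (hM : IsPerfMatching M) (σ : Fin n ≃ Fin n) :
    IsPerfMatching (M.comap σ) := by
  intro v
  obtain ⟨w, hw, -⟩ := hM (σ v)
  refine ⟨σ.symm w, by simpa using hw, fun w' hw' => ?_⟩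
  rw [σ.eq_symm_apply]
  exact hM.unique hw' hw

lemma IsPerfMatching.eq_of_le (hM : IsPerfMatching M) (hN : IsPerfMatching N) (h : N ≤ M) :
    N = M := by
  refine le_antisymm h fun u w huw => ?_
  obtain ⟨w', hw', -⟩ := hN u
  rwa [hM.unique huw (h hw')]

lemma exists_isPerfMatching (m : ℕ) : ∃ M : SimpleGraph (Fin (2 * m)), IsPerfMatching M := by
  refine ⟨fromRel fun u v => u.val / 2 = v.val / 2, fun v => ?_⟩
  refine ⟨⟨2 * (v.val / 2) + 1 - v.val % 2, by omega⟩, ?_, fun w hw => ?_⟩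
  · simp only [fromRel_adj, ne_eq, Fin.ext_iff]
    omega
  · simp only [fromRel_adj, ne_eq, Fin.ext_iff] at hw ⊢
    omega

lemma edgeSet_symmDiff_comap_swap (hM : IsPerfMatching M) {x y a b : Fin n}
    (hxa : M.Adj x a) (hyb : M.Adj y b) (hxy : x ≠ y) (hay : a ≠ y) :
    (symmDiff M (M.comap (Equiv.swap a y))).edgeSet = {s(x, a), s(a, b), s(b, y), s(y, x)} := by
  have ux : ∀ w, M.Adj x w → w = a := fun w hw => hM.unique hw hxa
  have uy : ∀ w, M.Adj y w → w = b := fun w hw => hM.unique hw hyb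
  have ua : ∀ w, M.Adj a w → w = x := fun w hw => hM.unique hw hxa.symm
  have ub : ∀ w, M.Adj b w → w = y := fun w hw => hM.unique hw hyb.symm
  ext ⟨u, v⟩
  simp only [mem_edgeSet, symmDiff_def, sup_adj, sdiff_adj, comap_adj, Equiv.swap_apply_def,
    Set.mem_insert_iff, Set.mem_singleton_iff, Sym2.eq_iff]
  grind [SimpleGraph.adj_comm, SimpleGraph.ne_of_adj]

lemma matchAdj_comap_swap (hM : IsPerfMatching M) {x y a b : Fin n}
    (hxa : M.Adj x a) (hyb : M.Adj y b) (hxy : x ≠ y) (hay : a ≠ y) :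
    MatchAdj M (M.comap (Equiv.swap a y)) := by
  have hxb : x ≠ b := by rintro rfl; exact hay (hM.unique hxa hyb.symm)
  have hab : a ≠ b := by rintro rfl; exact hxy (hM.unique hxa.symm hyb.symm)
  have hE := edgeSet_symmDiff_comap_swap hM hxa hyb hxy hay
  refine ⟨fun h => ?_, isCycleGraphOfLength_four (M.ne_of_adj hxa) hxb hxy hab hay
    (M.ne_of_adj hyb).symm hE⟩
  rw [← h, symmDiff_self, edgeSet_bot] at hE
  exact (Set.insert_nonempty _ _).ne_empty hE.symm

open Classical in
noncomputable def disagreement (M N : SimpleGraph (Fin n)) : Finset (Fin n) :=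
  {u | ∃ w, N.Adj u w ∧ ¬ M.Adj u w}

@[simp]
lemma mem_disagreement {u : Fin n} :
    u ∈ disagreement M N ↔ ∃ w, N.Adj u w ∧ ¬ M.Adj u w := by
  simp [disagreement]

lemma IsPerfMatching.exists_matchAdj_disagreement_ssubset (hM : IsPerfMatching M)
    (hN : IsPerfMatching N) (hne : M ≠ N) :
    ∃ M', IsPerfMatching M' ∧ MatchAdj M M' ∧ disagreement M' N ⊂ disagreement M N := by
  obtain ⟨x, y, hNxy, hMxy⟩ : ∃ x y, N.Adj x y ∧ ¬ M.Adj x y := by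
    by_contra! h
    exact hne (hM.eq_of_le hN h).symm
  obtain ⟨a, hxa, -⟩ := hM x
  obtain ⟨b, hyb, -⟩ := hM y
  have hay : a ≠ y := by rintro rfl; exact hMxy hxa
  have hxy := N.ne_of_adj hNxy
  refine ⟨_, hM.comap_equiv _, matchAdj_comap_swap hM hxa hyb hxy hay, ?_⟩
  have hsub : disagreement (M.comap (Equiv.swap a y)) N ⊆ disagreement M N := by
    intro u
    simp only [mem_disagreement, comap_adj]
    contrapose!
    intro hu w huw
    have hua : u ≠ a := fun h => by
      subst u
      exact hay (hN.unique hNxy (hM.unique (hu w huw) hxa.symm ▸ huw).symm).symm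
    have huy : u ≠ y := fun h => by
      subst u
      exact hMxy (hN.unique huw hNxy.symm ▸ hu w huw).symm
    have hwa : w ≠ a := fun h => by
      subst w
      exact hay (hN.unique (hM.unique (hu a huw).symm hxa.symm ▸ huw) hNxy)
    have hwy : w ≠ y := fun h => by
      subst w
      exact hMxy (hN.unique huw.symm hNxy.symm ▸ hu y huw)
    rw [Equiv.swap_apply_of_ne_of_ne hua huy, Equiv.swap_apply_of_ne_of_ne hwa hwy]
    exact hu w huw
  refine (Finset.ssubset_iff_of_subset hsub).2 ⟨x, mem_disagreement.2 ⟨y, hNxy, hMxy⟩, ?_⟩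
  intro hx
  obtain ⟨w, hxw, hnot⟩ := mem_disagreement.1 hx
  rw [hN.unique hxw hNxy, comap_adj, Equiv.swap_apply_right,
    Equiv.swap_apply_of_ne_of_ne (M.ne_of_adj hxa) hxy] at hnot
  exact hnot hxa

end PerfectMatching

theorem stmt3_general (m : ℕ) : (matchingGraph m).Connected := by
  obtain ⟨M₀, hM₀⟩ := exists_isPerfMatching m
  refine (connected_iff_exists_forall_reachable _).2 ⟨⟨M₀, hM₀⟩, fun M => .symm ?_⟩
  refine reachable_of_forall_exists_adj_lt (fun M : PMVertex m => (disagreement M.1 M₀).card)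
    (fun M hne => ?_) M
  obtain ⟨M', hM', hadj, hlt⟩ :=
    M.2.exists_matchAdj_disagreement_ssubset hM₀ (Subtype.coe_ne_coe.2 hne)
  exact ⟨⟨M', hM'⟩, hadj, Finset.card_lt_card hlt⟩

/-- The graph `𝒫ₘ` of perfect matchings of `K_{2m}` is connected. -/
theorem stmt3 (m : ℕ) (hm : 1 ≤ m) : (matchingGraph m).Connected :=
  stmt3_general m
end

section
/- Let M₁ and M₂ be perfect matchings of K_{2m} and let l be the number of connected components of the graph M₁ ∪ M₂. Then the distance between M₁ and M₂ in the graph 𝒫_m is d(M₁,M₂) = m - l. -/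
open SimpleGraph

/-!
Write `c(G)` for the number of connected components. A move `A → A'` in `𝒫ₘ` replaces two
edges `ab, cd` of `A` by `bc, da`. In `A' ⊔ B ⊔ ab` the vertices `c, d` are already joined
through `b, a`, so adding back `cd` merges nothing, and adding `ab` merges at most two
components: hence a move raises `c(· ⊔ B)` by at most one. Conversely, if `A ≠ B`, pick `a`
whose partners `b` in `A` and `d` in `B` differ and let `c` be the `A`-partner of `d`.
Conjugating `A` by the transposition `(b d)` is a move that closes `a, d` into a 2-cycle of
`A' ⊔ B` and raises `c(· ⊔ B)` by one. As `c(M ⊔ M) = m` and `c(A ⊔ B) ≤ m` (all components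
have at least two vertices), the distance is `m - c(M₁ ⊔ M₂)`.
-/

namespace SimpleGraph

variable {V : Type*}

section Connectivity

variable {G : SimpleGraph V} {s : Set V} {u v x y : V}

lemma Reachable.mem_of_forall_adj_mem (hs : ∀ x ∈ s, ∀ y, G.Adj x y → y ∈ s)
    (hx : x ∈ s) (h : G.Reachable x y) : y ∈ s := by
  obtain ⟨p⟩ := h
  induction p with
  | nil => exact hx
  | cons hadj _ ih => exact ih (hs _ hx _ hadj)

lemma reachable_sup_edge (G : SimpleGraph V) (u v : V) : (G ⊔ edge u v).Reachable u v := by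
  by_cases huv : u = v
  · exact huv ▸ .rfl
  · exact Adj.reachable (.inr ((edge_adj ..).mpr ⟨.inl ⟨rfl, rfl⟩, huv⟩))

lemma Reachable.of_sup_edge (h : (G ⊔ edge u v).Reachable x y) :
    G.Reachable x y ∨ G.Reachable x u ∨ G.Reachable x v := by
  obtain ⟨p⟩ := h
  induction p with
  | nil => exact .inl .rfl
  | cons hadj _ ih =>
    rcases hadj with hadj | hadj
    · rcases ih with h | h | h <;> simp [hadj.reachable.trans h]
    · obtain ⟨⟨rfl, -⟩ | ⟨rfl, -⟩, -⟩ := (edge_adj ..).mp hadj <;> simp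

variable [Finite V]

lemma card_connectedComponent_le_sup_edge_add_one :
    Nat.card G.ConnectedComponent ≤ Nat.card (G ⊔ edge u v).ConnectedComponent + 1 := by
  classical
  rw [← Finite.card_option]
  refine Nat.card_le_card_of_injective
    (fun c => if c = G.connectedComponentMk v then none
      else some (c.map (Hom.ofLE le_sup_left))) fun c₁ c₂ h => ?_
  induction c₁ using ConnectedComponent.ind with | h x => ?_
  induction c₂ using ConnectedComponent.ind with | h y => ?_
  by_cases hx : G.connectedComponentMk x = G.connectedComponentMk v <;>
    by_cases hy : G.connectedComponentMk y = G.connectedComponentMk v <;>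
    simp only [hx, hy, if_true, if_false, reduceCtorEq, Option.some.injEq] at h
  · rw [hx, hy]
  simp only [ConnectedComponent.map_mk, Hom.coe_ofLE, id, ConnectedComponent.eq] at h hx hy ⊢
  rcases h.of_sup_edge with hxy | hxu | hxv
  · exact hxy
  rcases h.symm.of_sup_edge with hyx | hyu | hyv
  · exact hyx.symm
  · exact hxu.trans hyu.symm
  all_goals contradiction

lemma card_connectedComponent_sup_edge_of_reachable (huv : G.Reachable u v) :
    Nat.card (G ⊔ edge u v).ConnectedComponent = Nat.card G.ConnectedComponent := by
  refine le_antisymm (ConnectedComponent.card_le_card_of_le le_sup_left)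
    (Nat.card_le_card_of_injective (ConnectedComponent.map (Hom.ofLE le_sup_left))
      fun c₁ c₂ h => ?_)
  induction c₁ using ConnectedComponent.ind with | h x => ?_
  induction c₂ using ConnectedComponent.ind with | h y => ?_
  simp only [ConnectedComponent.map_mk, Hom.coe_ofLE, id, ConnectedComponent.eq] at h ⊢
  have reach_u {x y : V} (h : (G ⊔ edge u v).Reachable x y) :
      G.Reachable x y ∨ G.Reachable x u := by
    rcases h.of_sup_edge with h' | h' | h'
    exacts [.inl h', .inr h', .inr (h'.trans huv.symm)]
  rcases reach_u h with hxy | hxu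
  · exact hxy
  rcases reach_u h.symm with hyx | hyu
  exacts [hyx.symm, hxu.trans hyu.symm]

lemma card_connectedComponent_sup_edge_lt (huv : ¬G.Reachable u v) :
    Nat.card (G ⊔ edge u v).ConnectedComponent < Nat.card G.ConnectedComponent := by
  have := Fintype.ofFinite G.ConnectedComponent
  have := Fintype.ofFinite (G ⊔ edge u v).ConnectedComponent
  simp only [Nat.card_eq_fintype_card]
  refine Fintype.card_lt_of_surjective_not_injective _
    (ConnectedComponent.surjective_map_ofLE le_sup_left) fun hinj => huv ?_
  refine ConnectedComponent.eq.mp (hinj ?_)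
  simp only [ConnectedComponent.map_mk, Hom.coe_ofLE, id, ConnectedComponent.eq]
  exact G.reachable_sup_edge u v

lemma card_eq_sum_card_supp [Fintype G.ConnectedComponent] :
    Nat.card V = ∑ c : G.ConnectedComponent, Nat.card c.supp := by
  rw [← Nat.card_sigma]
  exact Nat.card_congr (Equiv.sigmaFiberEquiv G.connectedComponentMk).symm

lemma mul_card_connectedComponent_le {k : ℕ}
    (h : ∀ v, k ≤ Nat.card (G.connectedComponentMk v).supp) :
    k * Nat.card G.ConnectedComponent ≤ Nat.card V := by
  have := Fintype.ofFinite G.ConnectedComponent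
  rw [card_eq_sum_card_supp (G := G), Nat.card_eq_fintype_card, mul_comm,
    ← smul_eq_mul, ← Finset.card_univ, ← Finset.sum_const]
  exact Finset.sum_le_sum fun c _ => c.ind h

lemma card_le_mul_card_connectedComponent {k : ℕ}
    (h : ∀ v, Nat.card (G.connectedComponentMk v).supp ≤ k) :
    Nat.card V ≤ k * Nat.card G.ConnectedComponent := by
  have := Fintype.ofFinite G.ConnectedComponent
  rw [card_eq_sum_card_supp (G := G), Nat.card_eq_fintype_card, mul_comm,
    ← smul_eq_mul, ← Finset.card_univ, ← Finset.sum_const]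
  exact Finset.sum_le_sum fun c _ => c.ind h

lemma two_mul_card_connectedComponent_le (h : ∀ v, ∃ w, G.Adj v w) :
    2 * Nat.card G.ConnectedComponent ≤ Nat.card V := by
  refine mul_card_connectedComponent_le fun v => ?_
  obtain ⟨w, hvw⟩ := h v
  have hsub : ({v, w} : Set V) ⊆ (G.connectedComponentMk v).supp := by
    rintro x (rfl | rfl)
    exacts [rfl, (ConnectedComponent.sound hvw.reachable).symm]
  rw [Nat.card_coe_set_eq, ← Set.ncard_pair hvw.ne]
  exact Set.ncard_le_ncard hsub

lemma card_le_two_mul_card_connectedComponent (hG : ∀ v, ∃! w, G.Adj v w) :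
    Nat.card V ≤ 2 * Nat.card G.ConnectedComponent := by
  refine card_le_mul_card_connectedComponent fun v => ?_
  obtain ⟨w, hvw, -⟩ := hG v
  have hsub : (G.connectedComponentMk v).supp ⊆ {v, w} := by
    intro x hx
    refine (ConnectedComponent.eq.mp hx).symm.mem_of_forall_adj_mem ?_ (.inl rfl)
    rintro x (rfl | rfl) y hxy
    · exact .inr ((hG x).unique hxy hvw)
    · exact .inl ((hG x).unique hxy hvw.symm)
  rw [Nat.card_coe_set_eq]
  calc (G.connectedComponentMk v).supp.ncard
      ≤ ({v, w} : Set V).ncard := Set.ncard_le_ncard hsub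
    _ = 2 := Set.ncard_pair hvw.ne

end Connectivity

lemma isCycleGraphOfLength_four_iff {D : SimpleGraph V} :
    IsCycleGraphOfLength D 4 ↔ ∃ a b c d, a ≠ c ∧ b ≠ d ∧
      D.Adj a b ∧ D.Adj b c ∧ D.Adj c d ∧ D.Adj d a ∧
      ∀ e ∈ D.edgeSet, e ∈ [s(a, b), s(b, c), s(c, d), s(d, a)] := by
  constructor
  · rintro ⟨a, p, hp, hlen, hedges⟩
    match p, hp, hlen, hedges with
    | .cons hab (.cons hbc (.cons hcd (.cons hda .nil))), hp, _, hedges =>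
      have hnodup := hp.support_nodup
      simp only [Walk.support_cons, Walk.support_nil, List.tail_cons, List.nodup_cons,
        List.mem_cons, List.not_mem_nil] at hnodup
      exact ⟨a, _, _, _, by tauto, by tauto, hab, hbc, hcd, hda, hedges⟩
  · rintro ⟨a, b, c, d, hac, hbd, hab, hbc, hcd, hda, hedges⟩
    refine ⟨a, .cons hab (.cons hbc (.cons hcd (.cons hda .nil))), ?_, rfl, hedges⟩
    simp [Walk.cons_isCycle_iff, Walk.isPath_def, hab.ne, hbc.ne, hcd.ne, hda.ne, hac, hbd,
      hab.ne.symm, hda.ne.symm, hac.symm]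

section Matching

variable {A A' : SimpleGraph V} {a b c d x y : V}

lemma symmDiff_adj :
    (symmDiff A A').Adj x y ↔ A.Adj x y ∧ ¬A'.Adj x y ∨ A'.Adj x y ∧ ¬A.Adj x y := by
  simp [symmDiff_def]

lemma adj_of_symmDiff_adj (hA : ∀ v, ∃! w, A.Adj v w) (hab : A.Adj a b)
    (hbc : (symmDiff A A').Adj b c) (hac : a ≠ c) : A'.Adj b c := by
  rcases symmDiff_adj.mp hbc with ⟨h, -⟩ | ⟨h, -⟩
  · exact absurd ((hA b).unique hab.symm h) hac
  · exact h

lemma le_sup_edge_sup_edge_of_forall_mem_edgeSet_symmDiff (hab : a ≠ b) (hcd : c ≠ d)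
    (hbc : A'.Adj b c) (hda : A'.Adj d a)
    (hedges : ∀ e ∈ (symmDiff A A').edgeSet, e ∈ [s(a, b), s(b, c), s(c, d), s(d, a)]) :
    A ≤ A' ⊔ edge a b ⊔ edge c d := by
  rw [← edgeSet_subset_edgeSet, edgeSet_sup, edgeSet_sup, edgeSet_edge_of_ne hab,
    edgeSet_edge_of_ne hcd]
  intro e he
  by_cases he' : e ∈ A'.edgeSet
  · exact .inl (.inl he')
  have := hedges e (by rw [symmDiff_def, edgeSet_sup, edgeSet_sdiff]; exact .inl ⟨he, he'⟩)
  simp only [List.mem_cons, List.not_mem_nil, or_false] at this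
  rcases this with rfl | rfl | rfl | rfl
  · simp
  · exact absurd hbc he'
  · simp
  · exact absurd hda he'

lemma exists_le_sup_edge_sup_edge_of_isCycleGraphOfLength_symmDiff
    (hA : ∀ v, ∃! w, A.Adj v w) (hA' : ∀ v, ∃! w, A'.Adj v w)
    (h : IsCycleGraphOfLength (symmDiff A A') 4) :
    ∃ a b c d, A'.Adj b c ∧ A'.Adj d a ∧ A ≤ A' ⊔ edge a b ⊔ edge c d := by
  have hcomm {x y} (h : (symmDiff A A').Adj x y) : (symmDiff A' A).Adj x y := by
    rwa [symmDiff_comm]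
  -- rotate the square so that its first edge lies in `A`
  obtain ⟨a, b, c, d, hac, hbd, hbc, hcd, hda, hedges, hAab⟩ :
      ∃ a b c d, a ≠ c ∧ b ≠ d ∧ (symmDiff A A').Adj b c ∧
        (symmDiff A A').Adj c d ∧ (symmDiff A A').Adj d a ∧
        (∀ e ∈ (symmDiff A A').edgeSet, e ∈ [s(a, b), s(b, c), s(c, d), s(d, a)]) ∧
        A.Adj a b := by
    obtain ⟨a, b, c, d, hac, hbd, hab, hbc, hcd, hda, hedges⟩ :=
      isCycleGraphOfLength_four_iff.mp h
    by_cases hAab : A.Adj a b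
    · exact ⟨a, b, c, d, hac, hbd, hbc, hcd, hda, hedges, hAab⟩
    have hA'ab : A'.Adj a b := by simpa [hAab] using symmDiff_adj.mp hab
    refine ⟨b, c, d, a, hbd, hac.symm, hcd, hda, hab, fun e he => ?_,
      adj_of_symmDiff_adj hA' hA'ab (hcomm hbc) hac⟩
    have := hedges e he
    simp only [List.mem_cons, List.not_mem_nil, or_false] at this ⊢
    tauto
  have hA'bc := adj_of_symmDiff_adj hA hAab hbc hac
  have hAcd := adj_of_symmDiff_adj hA' hA'bc (hcomm hcd) hbd
  have hA'da := adj_of_symmDiff_adj hA hAcd hda hac.symm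
  exact ⟨a, b, c, d, hA'bc, hA'da,
    le_sup_edge_sup_edge_of_forall_mem_edgeSet_symmDiff hAab.ne hAcd.ne hA'bc hA'da hedges⟩

lemma card_connectedComponent_sup_le_add_one_of_isCycleGraphOfLength_symmDiff [Finite V]
    (hA : ∀ v, ∃! w, A.Adj v w) (hA' : ∀ v, ∃! w, A'.Adj v w)
    (h : IsCycleGraphOfLength (symmDiff A A') 4) (B : SimpleGraph V) :
    Nat.card (A' ⊔ B).ConnectedComponent ≤ Nat.card (A ⊔ B).ConnectedComponent + 1 := by
  obtain ⟨a, b, c, d, hbc, hda, hle⟩ :=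
    exists_le_sup_edge_sup_edge_of_isCycleGraphOfLength_symmDiff hA hA' h
  have hcd : (A' ⊔ B ⊔ edge a b).Reachable c d :=
    (show (A' ⊔ B ⊔ edge a b).Adj c b from .inl (.inl hbc.symm)).reachable.trans <|
      ((A' ⊔ B).reachable_sup_edge a b).symm.trans
        (show (A' ⊔ B ⊔ edge a b).Adj a d from .inl (.inl hda.symm)).reachable
  have hle' : A ⊔ B ≤ A' ⊔ B ⊔ edge a b ⊔ edge c d :=
    calc A ⊔ B ≤ A' ⊔ edge a b ⊔ edge c d ⊔ B := sup_le_sup_right hle B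
      _ = A' ⊔ B ⊔ edge a b ⊔ edge c d := by ac_rfl
  calc Nat.card (A' ⊔ B).ConnectedComponent
      ≤ Nat.card (A' ⊔ B ⊔ edge a b).ConnectedComponent + 1 :=
        card_connectedComponent_le_sup_edge_add_one
    _ = Nat.card (A' ⊔ B ⊔ edge a b ⊔ edge c d).ConnectedComponent + 1 := by
        rw [card_connectedComponent_sup_edge_of_reachable hcd]
    _ ≤ Nat.card (A ⊔ B).ConnectedComponent + 1 := by
        gcongr
        exact ConnectedComponent.card_le_card_of_le hle'

end Matching

section Swap

variable {A B : SimpleGraph V} {a b c d x y : V}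

lemma comap_equiv_existsUnique_adj {W : Type*} {M : SimpleGraph W} (σ : V ≃ W)
    (hM : ∀ w, ∃! w', M.Adj w w') (v : V) : ∃! v', (M.comap σ).Adj v v' := by
  obtain ⟨w, hw, huniq⟩ := hM (σ v)
  exact ⟨σ.symm w, by simpa using hw, fun v' hv' => σ.eq_symm_apply.mpr (huniq _ hv')⟩

lemma adj_iff_eq_of_adj (hA : ∀ v, ∃! w, A.Adj v w) (hab : A.Adj a b) : A.Adj a y ↔ y = b :=
  ⟨fun h => (hA a).unique h hab, fun h => h ▸ hab⟩

lemma exists_adj_adj_ne_of_ne (hA : ∀ v, ∃! w, A.Adj v w) (hB : ∀ v, ∃! w, B.Adj v w)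
    (hne : A ≠ B) : ∃ a b d, A.Adj a b ∧ B.Adj a d ∧ b ≠ d := by
  by_contra! h
  refine hne (SimpleGraph.ext (funext₂ fun x y => propext ⟨fun hxy => ?_, fun hxy => ?_⟩))
  · obtain ⟨z, hxz, -⟩ := hB x
    exact h x y z hxy hxz ▸ hxz
  · obtain ⟨z, hxz, -⟩ := hA x
    exact h x z y hxz hxy ▸ hxz

variable [DecidableEq V]

lemma comap_swap_adj_left_iff (hA : ∀ v, ∃! w, A.Adj v w) (hcd : A.Adj c d) (hcb : c ≠ b) :
    (A.comap (Equiv.swap b d)).Adj b y ↔ y = c := by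
  have hc : Equiv.swap b d c = c := Equiv.swap_apply_of_ne_of_ne hcb hcd.ne
  rw [comap_adj, Equiv.swap_apply_left, adj_iff_eq_of_adj hA hcd.symm,
    ← (Equiv.swap b d).injective.eq_iff, Equiv.swap_apply_self, hc]

lemma comap_swap_adj_right_iff (hA : ∀ v, ∃! w, A.Adj v w) (hab : A.Adj a b) (had : a ≠ d) :
    (A.comap (Equiv.swap b d)).Adj d y ↔ y = a := by
  rw [Equiv.swap_comm]
  exact comap_swap_adj_left_iff hA hab had

lemma comap_swap_adj_of_ne (hxb : x ≠ b) (hxd : x ≠ d) (hyb : y ≠ b) (hyd : y ≠ d) :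
    (A.comap (Equiv.swap b d)).Adj x y ↔ A.Adj x y := by
  simp [Equiv.swap_apply_of_ne_of_ne, *]

lemma isCycleGraphOfLength_symmDiff_comap_swap (hA : ∀ v, ∃! w, A.Adj v w)
    (hab : A.Adj a b) (hcd : A.Adj c d) (had : a ≠ d) (hbd : b ≠ d) :
    IsCycleGraphOfLength (symmDiff A (A.comap (Equiv.swap b d))) 4 := by
  have hca : c ≠ a := fun h => hbd ((hA a).unique hab (h ▸ hcd))
  have hcb : c ≠ b := fun h => had ((hA b).unique hab.symm (h ▸ hcd))
  have hA'b (y) := comap_swap_adj_left_iff (y := y) hA hcd hcb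
  have hA'd (y) := comap_swap_adj_right_iff (y := y) hA hab had
  have hAb (y) := adj_iff_eq_of_adj (y := y) hA hab.symm
  have hAd (y) := adj_iff_eq_of_adj (y := y) hA hcd.symm
  refine isCycleGraphOfLength_four_iff.mpr ⟨a, b, c, d, hca.symm, hbd, ?_, ?_, ?_, ?_, ?_⟩
  · exact symmDiff_adj.mpr (.inl ⟨hab, fun h => hca.symm ((hA'b a).mp h.symm)⟩)
  · exact symmDiff_adj.mpr (.inr ⟨(hA'b c).mpr rfl, fun h => hca ((hAb c).mp h)⟩)
  · exact symmDiff_adj.mpr (.inl ⟨hcd, fun h => hca ((hA'd c).mp h.symm)⟩)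
  · exact symmDiff_adj.mpr (.inr ⟨(hA'd a).mpr rfl, fun h => hca.symm ((hAd a).mp h)⟩)
  have hend : ∀ x y, (symmDiff A (A.comap (Equiv.swap b d))).Adj x y → x = b ∨ x = d →
      s(x, y) ∈ [s(a, b), s(b, c), s(c, d), s(d, a)] := by
    rintro x y h (rfl | rfl)
    · rw [symmDiff_adj, hA'b, hAb] at h
      rcases h with ⟨rfl, -⟩ | ⟨rfl, -⟩ <;> simp [Sym2.eq_swap]
    · rw [symmDiff_adj, hA'd, hAd] at h
      rcases h with ⟨rfl, -⟩ | ⟨rfl, -⟩ <;> simp [Sym2.eq_swap]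
  intro e he
  induction e using Sym2.ind with | h x y => ?_
  rw [mem_edgeSet] at he
  by_cases hx : x = b ∨ x = d
  · exact hend x y he hx
  by_cases hy : y = b ∨ y = d
  · rw [Sym2.eq_swap (a := x)]
    exact hend y x he.symm hy
  simp only [not_or] at hx hy
  rw [symmDiff_adj, comap_swap_adj_of_ne hx.1 hx.2 hy.1 hy.2] at he
  tauto

lemma comap_swap_le (hA : ∀ v, ∃! w, A.Adj v w)
    (hab : A.Adj a b) (hcd : A.Adj c d) (had : a ≠ d) (hbd : b ≠ d) :
    A.comap (Equiv.swap b d) ≤ A ⊔ edge b c ⊔ edge d a := by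
  have hcb : c ≠ b := fun h => had ((hA b).unique hab.symm (h ▸ hcd))
  have hend : ∀ x y, (A.comap (Equiv.swap b d)).Adj x y → x = b ∨ x = d →
      (A ⊔ edge b c ⊔ edge d a).Adj x y := by
    rintro x y h (rfl | rfl)
    · obtain rfl := (comap_swap_adj_left_iff hA hcd hcb).mp h
      exact .inl (.inr ((edge_adj ..).mpr ⟨.inl ⟨rfl, rfl⟩, hcb.symm⟩))
    · obtain rfl := (comap_swap_adj_right_iff hA hab had).mp h
      exact .inr ((edge_adj ..).mpr ⟨.inl ⟨rfl, rfl⟩, had.symm⟩)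
  intro x y h
  by_cases hx : x = b ∨ x = d
  · exact hend x y h hx
  by_cases hy : y = b ∨ y = d
  · exact (hend y x h.symm hy).symm
  simp only [not_or] at hx hy
  exact .inl (.inl ((comap_swap_adj_of_ne hx.1 hx.2 hy.1 hy.2).mp h))

lemma card_connectedComponent_sup_lt_comap_swap_sup [Finite V] (hA : ∀ v, ∃! w, A.Adj v w)
    (hB : ∀ v, ∃! w, B.Adj v w) (hab : A.Adj a b) (hcd : A.Adj c d) (had : B.Adj a d)
    (hbd : b ≠ d) :
    Nat.card (A ⊔ B).ConnectedComponent <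
      Nat.card (A.comap (Equiv.swap b d) ⊔ B).ConnectedComponent := by
  have hA'd (y) := comap_swap_adj_right_iff (y := y) hA hab had.ne
  have hA' := comap_equiv_existsUnique_adj (Equiv.swap b d) hA
  -- in `A' ⊔ B` the vertices `a` and `d` are matched to each other by both matchings
  have hab' : ¬(A.comap (Equiv.swap b d) ⊔ B).Reachable a b := by
    refine fun h => (h.mem_of_forall_adj_mem ?_ (.inl rfl) : b ∈ ({a, d} : Set V)).elim
      hab.ne.symm hbd
    rintro x (rfl | rfl) y (hxy | hxy)
    · exact .inr ((hA' x).unique hxy ((hA'd x).mpr rfl).symm)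
    · exact .inr ((hB x).unique hxy had)
    · exact .inl ((hA'd y).mp hxy)
    · exact .inl ((hB x).unique hxy had.symm)
  have hbc : (A ⊔ B).Reachable b c :=
    (show (A ⊔ B).Adj b a from .inl hab.symm).reachable.trans <|
      (show (A ⊔ B).Adj a d from .inr had).reachable.trans
        (show (A ⊔ B).Adj d c from .inl hcd.symm).reachable
  have hle : A.comap (Equiv.swap b d) ⊔ B ⊔ edge a b ≤ A ⊔ B ⊔ edge b c := by
    rintro x y ((h | h) | h)
    · rcases comap_swap_le hA hab hcd had.ne hbd h with (h | h) | h
      exacts [.inl (.inl h), .inr h, .inl (.inr ((edge_le_iff _).mpr (.inr had.symm) h))]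
    · exact .inl (.inr h)
    · exact .inl (.inl ((edge_le_iff _).mpr (.inr hab) h))
  calc Nat.card (A ⊔ B).ConnectedComponent
      = Nat.card (A ⊔ B ⊔ edge b c).ConnectedComponent :=
        (card_connectedComponent_sup_edge_of_reachable hbc).symm
    _ ≤ Nat.card (A.comap (Equiv.swap b d) ⊔ B ⊔ edge a b).ConnectedComponent :=
        ConnectedComponent.card_le_card_of_le hle
    _ < Nat.card (A.comap (Equiv.swap b d) ⊔ B).ConnectedComponent :=
        card_connectedComponent_sup_edge_lt hab'

lemma exists_isCycleGraphOfLength_symmDiff_card_connectedComponent_sup_lt [Finite V]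
    (hA : ∀ v, ∃! w, A.Adj v w) (hB : ∀ v, ∃! w, B.Adj v w) (hne : A ≠ B) :
    ∃ A' : SimpleGraph V, (∀ v, ∃! w, A'.Adj v w) ∧ A ≠ A' ∧
      IsCycleGraphOfLength (symmDiff A A') 4 ∧
      Nat.card (A ⊔ B).ConnectedComponent < Nat.card (A' ⊔ B).ConnectedComponent := by
  classical
  obtain ⟨a, b, d, hab, had, hbd⟩ := exists_adj_adj_ne_of_ne hA hB hne
  obtain ⟨c, hdc, -⟩ := hA d
  have hcyc := isCycleGraphOfLength_symmDiff_comap_swap hA hab hdc.symm had.ne hbd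
  refine ⟨_, comap_equiv_existsUnique_adj _ hA, fun h => ?_, hcyc,
    card_connectedComponent_sup_lt_comap_swap_sup hA hB hab hdc.symm had hbd⟩
  obtain ⟨_, _, _, _, -, -, hD, -⟩ := isCycleGraphOfLength_four_iff.mp hcyc
  rw [← h, symmDiff_self] at hD
  exact hD

end Swap

end SimpleGraph

open SimpleGraph

lemma le_length_add_card_connectedComponent {m : ℕ} {M N : PMVertex m}
    (p : (matchingGraph m).Walk M N) :
    m ≤ p.length + Nat.card (M.1 ⊔ N.1).ConnectedComponent := by
  induction p with
  | @nil M =>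
    have := card_le_two_mul_card_connectedComponent M.2
    rw [Nat.card_fin] at this
    rw [sup_idem, Walk.length_nil]
    omega
  | @cons M M' N hadj _ ih =>
    have := card_connectedComponent_sup_le_add_one_of_isCycleGraphOfLength_symmDiff
      M.2 M'.2 hadj.2 N.1
    rw [Walk.length_cons]
    omega

lemma exists_walk_length_add_card_connectedComponent_le {m : ℕ} (M N : PMVertex m) :
    ∃ p : (matchingGraph m).Walk M N,
      p.length + Nat.card (M.1 ⊔ N.1).ConnectedComponent ≤ m := by
  have hle (A : SimpleGraph (Fin (2 * m))) (hA : ∀ v, ∃! w, A.Adj v w) :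
      Nat.card (A ⊔ N.1).ConnectedComponent ≤ m := by
    have := two_mul_card_connectedComponent_le (G := A ⊔ N.1)
      fun v => (hA v).exists.imp fun _ h => Or.inl h
    rw [Nat.card_fin] at this
    omega
  by_cases hMN : M = N
  · subst hMN
    exact ⟨.nil, by simpa using hle M.1 M.2⟩
  obtain ⟨A', hA', hne, hcyc, hlt⟩ :=
    exists_isCycleGraphOfLength_symmDiff_card_connectedComponent_sup_lt M.2 N.2
      (Subtype.coe_ne_coe.mpr hMN)
  obtain ⟨p, hp⟩ := exists_walk_length_add_card_connectedComponent_le ⟨A', hA'⟩ N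
  dsimp only at hp
  refine ⟨.cons (show (matchingGraph m).Adj M ⟨A', hA'⟩ from ⟨hne, hcyc⟩) p, ?_⟩
  rw [Walk.length_cons]
  omega
termination_by m - Nat.card (M.1 ⊔ N.1).ConnectedComponent
decreasing_by have := hle A' hA'; omega

theorem stmt4_general (m : ℕ) (M₁ M₂ : PMVertex m) (l : ℕ)
    (hl : l = Nat.card (M₁.1 ⊔ M₂.1).ConnectedComponent) :
    (matchingGraph m).dist M₁ M₂ = m - l := by
  subst hl
  obtain ⟨p, hp⟩ := exists_walk_length_add_card_connectedComponent_le M₁ M₂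
  obtain ⟨q, hq⟩ := Reachable.exists_walk_length_eq_dist ⟨p⟩
  have := le_length_add_card_connectedComponent q
  have := dist_le p
  omega

/-- The distance in `𝒫ₘ` between two perfect matchings `M₁, M₂` of `K_{2m}` is
`m - l`, where `l` is the number of connected components of `M₁ ∪ M₂`. -/
theorem stmt4 (m : ℕ) (hm : 1 ≤ m) (M₁ M₂ : PMVertex m) (l : ℕ)
    (hl : l = Nat.card (M₁.1 ⊔ M₂.1).ConnectedComponent) :
    (matchingGraph m).dist M₁ M₂ = m - l :=
  stmt4_general m M₁ M₂ l hl
end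

section
/- For every m ≥ 1, the eccentricity of every vertex of 𝒫_m equals m-1, and consequently the diameter of 𝒫_m equals m-1. -/
/-!
For perfect matchings `M, N` let `κ(M, N)` be the number of connected components of `M ⊔ N`
(its alternating cycles, an edge common to both counting as one), so `κ(M, M) = m`.
If `N, N'` are adjacent in `𝒫ₘ`, they differ only on the four vertices of the switching cycle;
`N` pairs these up, so they lie in at most two components of `M ⊔ N`, and
`κ(M, N) ≤ κ(M, N') + 1`. Conversely, if `N ≠ M`, pick `a` whose partners `b` in `N` and `c` in
`M` differ and switch the edges `ab, cd` of `N` to `ac, bd`: then `{a, c}` becomes a component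
on its own and `κ` grows by one. Hence `dist(M, N) = m - κ(M, N)`, and the maximum `m - 1` is
attained by any `N` making `M ⊔ N` a Hamiltonian cycle.
-/

open SimpleGraph

namespace SimpleGraph

def ofInvolution {n : ℕ} (g : Fin n → Fin n) (hg : Function.Involutive g)
    (hfix : ∀ v, g v ≠ v) : SimpleGraph (Fin n) where
  Adj v w := g v = w
  symm := ⟨by rintro v w rfl; exact hg v⟩
  loopless := ⟨hfix⟩

variable {V : Type*}

lemma symmDiff_adj_s5 (G H : SimpleGraph V) (v w : V) :
    (symmDiff G H).Adj v w ↔ ¬(G.Adj v w ↔ H.Adj v w) := by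
  rw [symmDiff_def]
  simp only [sup_adj, sdiff_adj]
  tauto

lemma adj_iff_adj_of_notMem_support_symmDiff {G H : SimpleGraph V} {v : V}
    (hv : v ∉ (symmDiff G H).support) (w : V) : G.Adj v w ↔ H.Adj v w := by
  by_contra h
  exact hv ((symmDiff G H).mem_support.2 ⟨w, (symmDiff_adj_s5 G H v w).2 h⟩)

lemma Reachable.mem_of_adj_closed {G : SimpleGraph V} {U : Set V}
    (hU : ∀ u ∈ U, ∀ w, G.Adj u w → w ∈ U) {v w : V} (h : G.Reachable v w)
    (hv : v ∈ U) : w ∈ U := by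
  obtain ⟨p⟩ := h
  induction p with
  | nil => exact hv
  | cons huw _ ih => exact ih (hU _ hv _ huw)

lemma reachable_of_forall_reachable_add_one {G : SimpleGraph V} {k : ℕ} (a : Fin (k + 1) → V)
    (h : ∀ i, G.Reachable (a i) (a (i + 1))) (i : Fin (k + 1)) : G.Reachable (a 0) (a i) := by
  induction i using Fin.induction with
  | zero => rfl
  | succ i ih => exact ih.trans (Fin.coeSucc_eq_succ (a := i) ▸ h i.castSucc)

section

variable {G G' : SimpleGraph V} {S : Set V} (hS : ∀ v ∉ S, ∀ w, G.Adj v w ↔ G'.Adj v w)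
include hS

lemma reachable_of_reachable_of_forall_adj_iff {v w : V}
    (hv : G.connectedComponentMk v ∉ G.connectedComponentMk '' S) (h : G'.Reachable v w) :
    G.Reachable v w := by
  obtain ⟨p⟩ := h
  induction p with
  | nil => rfl
  | @cons u x w hux _ ih =>
    have hGux : G.Adj u x := (hS u (fun hu => hv ⟨u, hu, rfl⟩) x).2 hux
    rw [← ConnectedComponent.connectedComponentMk_eq_of_adj hGux] at ih
    exact hGux.reachable.trans (ih hv)

lemma ncard_compl_image_connectedComponentMk_le [Finite V] :
    (G.connectedComponentMk '' S)ᶜ.ncard ≤ (G'.connectedComponentMk '' S)ᶜ.ncard := by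
  have out_eq (c : G.ConnectedComponent) : G.connectedComponentMk c.out = c := Quot.out_eq c
  have transfer {c : G.ConnectedComponent} (hc : c ∉ G.connectedComponentMk '' S) {w : V}
      (h : G'.Reachable c.out w) : G.connectedComponentMk w = c := by
    rw [← out_eq c] at hc ⊢
    exact ConnectedComponent.eq.2 (reachable_of_reachable_of_forall_adj_iff hS hc h).symm
  refine Set.ncard_le_ncard_of_injOn (fun c => G'.connectedComponentMk c.out) ?_ ?_
    (Set.toFinite _)
  · rintro c hc ⟨s, hs, hsc⟩
    exact hc ⟨s, hs, transfer hc (ConnectedComponent.eq.1 hsc.symm)⟩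
  · intro c₁ hc₁ c₂ _ h
    rw [← transfer hc₁ (ConnectedComponent.eq.1 h), out_eq]

/-- The components of `G` and `G'` that avoid `S` are the same. -/
theorem card_connectedComponent_add_ncard_image_eq [Finite V] :
    Nat.card G.ConnectedComponent + (G'.connectedComponentMk '' S).ncard =
      Nat.card G'.ConnectedComponent + (G.connectedComponentMk '' S).ncard := by
  have h₁ := ncard_compl_image_connectedComponentMk_le hS
  have h₂ := ncard_compl_image_connectedComponentMk_le fun v hv w => (hS v hv w).symm
  have h₃ := Set.ncard_add_ncard_compl (G.connectedComponentMk '' S)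
  have h₄ := Set.ncard_add_ncard_compl (G'.connectedComponentMk '' S)
  omega

end

end SimpleGraph

lemma Set.two_mul_ncard_image_le {α β : Type*} {f : α → β} {S : Set α} (hS : S.Finite)
    (h : ∀ a ∈ S, ∃ b ∈ S, b ≠ a ∧ f b = f a) : 2 * (f '' S).ncard ≤ S.ncard := by
  classical
  lift S to Finset α using hS
  rw [← Finset.coe_image, Set.ncard_coe_finset, Set.ncard_coe_finset]
  refine Finset.mul_card_image_le_card _ _ fun y hy => ?_
  obtain ⟨a, ha, rfl⟩ := Finset.mem_image.1 hy
  obtain ⟨b, hb, hba, hfb⟩ := h a ha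
  calc 2 = ({b, a} : Finset α).card := (Finset.card_pair hba).symm
    _ ≤ _ := Finset.card_le_card <| by
      simp [Finset.insert_subset_iff, ha, Finset.mem_coe.1 hb, hfb]

namespace IsCycleGraphOfLength

variable {V : Type*} {G : SimpleGraph V}

lemma ncard_support_le {k : ℕ} (h : IsCycleGraphOfLength G k) : G.support.ncard ≤ k := by
  classical
  obtain ⟨v, p, hp, rfl, hcover⟩ := h
  have hsub : G.support ⊆ {x | x ∈ p.support.tail} := by
    rintro x ⟨y, hxy⟩
    have hx := p.fst_mem_support_of_mem_edges (hcover _ hxy)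
    rcases p.mem_support_iff.1 hx with rfl | hx
    · exact Walk.end_mem_tail_support hp.not_nil
    · exact hx
  calc G.support.ncard ≤ (p.support.tail.toFinset : Set V).ncard := by
        refine Set.ncard_le_ncard ?_ (Finset.finite_toSet _)
        simpa using hsub
    _ ≤ p.support.tail.length := by
        rw [Set.ncard_coe_finset]
        exact List.toFinset_card_le _
    _ = p.length := by simp

lemma of_four {a b c d : V} (hab : G.Adj a b) (hbc : G.Adj b c) (hcd : G.Adj c d)
    (hda : G.Adj d a) (hac : a ≠ c) (hbd : b ≠ d) (hnac : ¬G.Adj a c) (hnbd : ¬G.Adj b d)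
    (hsupp : G.support ⊆ {a, b, c, d}) : IsCycleGraphOfLength G 4 := by
  refine ⟨a, .cons hab (.cons hbc (.cons hcd (.cons hda .nil))), ?_, rfl, ?_⟩
  · simp [Walk.cons_isCycle_iff, hab.ne', hbc.ne, hcd.ne, hda.ne, hac, hac.symm, hbd,
      Sym2.eq_swap]
  · intro e he
    induction e using Sym2.ind with | _ x y => ?_
    have hx := hsupp ⟨y, he⟩
    have hy := hsupp ⟨x, he.symm⟩
    simp only [Set.mem_insert_iff, Set.mem_singleton_iff] at hx hy
    have hnca : ¬G.Adj c a := fun h => hnac h.symm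
    have hndb : ¬G.Adj d b := fun h => hnbd h.symm
    rcases hx with rfl | rfl | rfl | rfl <;> rcases hy with rfl | rfl | rfl | rfl <;>
      simp_all [Sym2.eq_swap]

end IsCycleGraphOfLength

namespace IsPerfMatching

open Finset

variable {n : ℕ} {M N : SimpleGraph (Fin n)}

lemma ofInvolution {g : Fin n → Fin n} (hg : Function.Involutive g) (hfix : ∀ v, g v ≠ v) :
    IsPerfMatching (SimpleGraph.ofInvolution g hg hfix) :=
  fun v => ⟨g v, rfl, fun _ h => Eq.symm h⟩

noncomputable def partner (hM : IsPerfMatching M) (v : Fin n) : Fin n :=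
  (hM v).exists.choose

section

variable (hM : IsPerfMatching M) (hN : IsPerfMatching N)
include hM

lemma adj_partner (v : Fin n) : M.Adj v (hM.partner v) :=
  (hM v).exists.choose_spec

lemma adj_iff {v w : Fin n} : M.Adj v w ↔ hM.partner v = w :=
  ⟨fun h => (hM v).unique (hM.adj_partner v) h, fun h => h ▸ hM.adj_partner v⟩

lemma partner_partner (v : Fin n) : hM.partner (hM.partner v) = v :=
  hM.adj_iff.1 (hM.adj_partner v).symm

lemma partner_ne (v : Fin n) : hM.partner v ≠ v :=
  (hM.adj_partner v).ne'

lemma reachable_iff {v w : Fin n} : M.Reachable v w ↔ w = v ∨ w = hM.partner v := by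
  refine ⟨fun h => h.mem_of_adj_closed (U := {x | x = v ∨ x = hM.partner v}) ?_ (.inl rfl),
    ?_⟩
  · rintro u (rfl | rfl) x hux <;> rw [hM.adj_iff] at hux <;> simp [← hux, hM.partner_partner]
  · rintro (rfl | rfl)
    exacts [.refl _, (hM.adj_partner v).reachable]

lemma two_mul_card_connectedComponent : 2 * Nat.card M.ConnectedComponent = n := by
  classical
  have : Fintype M.ConnectedComponent := Fintype.ofFinite _
  have hfiber (c : M.ConnectedComponent) : #{v | M.connectedComponentMk v = c} = 2 := by
    induction c using ConnectedComponent.ind with | h v => ?_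
    have : ({w | M.connectedComponentMk w = M.connectedComponentMk v} : Finset _) =
        {v, hM.partner v} := by
      ext w
      simp [ConnectedComponent.eq, hM.reachable_iff.symm, M.reachable_comm (u := w)]
    rw [this, card_pair (hM.partner_ne v).symm]
  have := card_eq_sum_card_fiberwise (s := univ) (t := univ) (f := M.connectedComponentMk)
    fun _ _ => mem_univ _
  simp only [hfiber, sum_const, card_univ, Fintype.card_fin, smul_eq_mul] at this
  rw [Nat.card_eq_fintype_card]
  omega

include hN in
lemma exists_partner_ne (h : M ≠ N) : ∃ v, hM.partner v ≠ hN.partner v := by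
  by_contra! hall
  exact h (by ext v w; rw [hM.adj_iff, hN.adj_iff, hall])

lemma comap_equiv_s5 (σ : Fin n ≃ Fin n) : IsPerfMatching (M.comap σ) := fun v =>
  ⟨σ.symm (hM.partner (σ v)), by simp [hM.adj_iff], fun w hw => by
    simp only [SimpleGraph.comap_adj, hM.adj_iff] at hw
    simp [hw]⟩

end

section Switching

variable {X X' : SimpleGraph (Fin n)}

lemma partner_mem_support_symmDiff (hX : IsPerfMatching X) (hX' : IsPerfMatching X')
    {s : Fin n} (hs : s ∈ (symmDiff X X').support) :
    hX.partner s ∈ (symmDiff X X').support := by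
  refine (symmDiff X X').mem_support.2 ⟨s, (symmDiff_adj_s5 _ _ _ _).2 fun h => ?_⟩
  obtain ⟨w, hsw⟩ := (symmDiff X X').mem_support.1 hs
  have hX's : hX'.partner s = hX.partner s :=
    hX'.adj_iff.1 (h.1 (hX.adj_partner s).symm).symm
  exact (symmDiff_adj_s5 _ _ _ _).1 hsw (by rw [hX.adj_iff, hX'.adj_iff, hX's])

theorem card_connectedComponent_sup_le_add_one (H : SimpleGraph (Fin n))
    (hX : IsPerfMatching X) (hX' : IsPerfMatching X') (h : MatchAdj X X') :
    Nat.card (H ⊔ X).ConnectedComponent ≤ Nat.card (H ⊔ X').ConnectedComponent + 1 := by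
  set S := (symmDiff X X').support
  have hagree : ∀ v ∉ S, ∀ w, (H ⊔ X).Adj v w ↔ (H ⊔ X').Adj v w := fun v hv w => by
    simp only [sup_adj, adj_iff_adj_of_notMem_support_symmDiff hv]
  have hpaired : 2 * ((H ⊔ X).connectedComponentMk '' S).ncard ≤ S.ncard :=
    Set.two_mul_ncard_image_le (Set.toFinite S) fun s hs =>
      ⟨hX.partner s, hX.partner_mem_support_symmDiff hX' hs, hX.partner_ne s,
        ConnectedComponent.connectedComponentMk_eq_of_adj
          (sup_adj _ _ _ _ |>.2 (.inr (hX.adj_partner s))).symm⟩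
  have hS : S.Nonempty := by
    by_contra! hempty
    refine h.1 (SimpleGraph.ext <| funext₂ fun v w => propext ?_)
    have hv : v ∉ S := by simp [hempty]
    exact adj_iff_adj_of_notMem_support_symmDiff hv w
  have hmeet : 1 ≤ ((H ⊔ X').connectedComponentMk '' S).ncard :=
    Nat.one_le_iff_ne_zero.2 ((Set.ncard_pos (Set.toFinite _)).2 (hS.image _)).ne'
  have := card_connectedComponent_add_ncard_image_eq hagree
  have hS4 : S.ncard ≤ 4 := h.2.ncard_support_le
  omega

open Equiv

variable {a b c d : Fin n}

/-- `N.comap (swap b c)` trades the edges `ab, cd` of `N` for `ac, bd`. -/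
lemma comap_swap_adj_iff_of_notMem (hN : IsPerfMatching N) (hab : N.Adj a b)
    (hcd : N.Adj c d) {x : Fin n} (hx : x ∉ ({a, b, c, d} : Set (Fin n))) (y : Fin n) :
    (N.comap (swap b c)).Adj x y ↔ N.Adj x y := by
  simp only [Set.mem_insert_iff, Set.mem_singleton_iff, not_or] at hx
  obtain ⟨hxa, hxb, hxc, hxd⟩ := hx
  have hgxb : hN.partner x ≠ b := fun h =>
    hxa (by rw [← hN.partner_partner x, h, hN.adj_iff.1 hab.symm])
  have hgxc : hN.partner x ≠ c := fun h =>
    hxd (by rw [← hN.partner_partner x, h, hN.adj_iff.1 hcd])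
  rw [comap_adj, swap_apply_of_ne_of_ne hxb hxc, hN.adj_iff, hN.adj_iff, eq_comm,
    swap_apply_eq_iff, swap_apply_of_ne_of_ne hgxb hgxc, eq_comm]

lemma matchAdj_comap_swap (hN : IsPerfMatching N) (hab : N.Adj a b) (hcd : N.Adj c d)
    (hac : a ≠ c) (hbc : b ≠ c) : MatchAdj N (N.comap (swap b c)) := by
  have hga := hN.adj_iff.1 hab
  have hgb := hN.adj_iff.1 hab.symm
  have hgc := hN.adj_iff.1 hcd
  have hgd := hN.adj_iff.1 hcd.symm
  have had : a ≠ d := fun h => hbc (by rw [← hga, h, hgd])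
  have hbd : b ≠ d := fun h => hac (by rw [← hgb, h, hgd])
  have hsa : swap b c a = a := swap_apply_of_ne_of_ne hab.ne hac
  have hsd : swap b c d = d := swap_apply_of_ne_of_ne hbd.symm hcd.ne'
  have hsupp : (symmDiff N (N.comap (swap b c))).support ⊆ {a, b, d, c} := by
    rintro x ⟨y, hxy⟩
    by_contra hx
    refine (symmDiff_adj_s5 _ _ _ _).1 hxy (hN.comap_swap_adj_iff_of_notMem hab hcd ?_ y).symm
    simp only [Set.mem_insert_iff, Set.mem_singleton_iff] at hx ⊢
    tauto
  refine ⟨fun h => hbc ?_, .of_four ?_ ?_ ?_ ?_ had hbc ?_ ?_ hsupp⟩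
  · have hab' : (N.comap (swap b c)).Adj a b := h ▸ hab
    rwa [comap_adj, hsa, swap_apply_left, hN.adj_iff, hga] at hab'
  all_goals simp [symmDiff_adj_s5, hN.adj_iff, hsa, hsd, hga, hgb, hgc, hgd, hbc, hbc.symm, had,
      had.symm, hbd, hbd.symm, hac]

theorem card_connectedComponent_sup_comap_swap (hM : IsPerfMatching M) (hN : IsPerfMatching N)
    (hac : M.Adj a c) (hab : N.Adj a b) (hcd : N.Adj c d) (hbc : b ≠ c) :
    Nat.card (M ⊔ N).ConnectedComponent + 1 ≤
      Nat.card (M ⊔ N.comap (swap b c)).ConnectedComponent := by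
  set S : Set (Fin n) := {a, b, c, d}
  have hagree : ∀ v ∉ S, ∀ w, (M ⊔ N).Adj v w ↔ (M ⊔ N.comap (swap b c)).Adj v w :=
    fun v hv w => by rw [sup_adj, sup_adj, hN.comap_swap_adj_iff_of_notMem hab hcd hv]
  have hone : ((M ⊔ N).connectedComponentMk '' S).ncard ≤ 1 := by
    have hmk {x y : Fin n} (h : M.Adj x y ∨ N.Adj x y) :
        (M ⊔ N).connectedComponentMk x = (M ⊔ N).connectedComponentMk y :=
      ConnectedComponent.connectedComponentMk_eq_of_adj ((sup_adj _ _ _ _).2 h)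
    have hsub : (M ⊔ N).connectedComponentMk '' S ⊆ {(M ⊔ N).connectedComponentMk a} := by
      rintro _ ⟨s, hs, rfl⟩
      rcases hs with rfl | rfl | rfl | rfl
      exacts [rfl, (hmk (.inr hab)).symm, (hmk (.inl hac)).symm,
        ((hmk (.inl hac)).trans (hmk (.inr hcd))).symm]
    exact (Set.ncard_le_ncard hsub (Set.toFinite _)).trans (Set.ncard_singleton _).le
  have hsep : ¬(M ⊔ N.comap (swap b c)).Reachable a b := fun h => by
    have hsa : swap b c a = a := swap_apply_of_ne_of_ne hab.ne hac.ne
    have hclosed : ∀ u ∈ ({a, c} : Set (Fin n)), ∀ w,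
        (M ⊔ N.comap (swap b c)).Adj u w → w ∈ ({a, c} : Set (Fin n)) := by
      rintro u (rfl | rfl : u = a ∨ u = c) w (huw | huw)
      · exact .inr ((hM.adj_iff.1 huw).symm.trans (hM.adj_iff.1 hac))
      · rw [comap_adj, hsa] at huw
        have := (hN.adj_iff.1 huw).symm.trans (hN.adj_iff.1 hab)
        exact .inr (by simpa using swap_apply_eq_iff.1 this)
      · exact .inl ((hM.adj_iff.1 huw).symm.trans (hM.adj_iff.1 hac.symm))
      · rw [comap_adj, swap_apply_right] at huw
        have := (hN.adj_iff.1 huw).symm.trans (hN.adj_iff.1 hab.symm)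
        exact .inl (by simpa [hsa] using swap_apply_eq_iff.1 this)
    rcases h.mem_of_adj_closed hclosed (.inl rfl) with h | h
    exacts [hab.ne h.symm, hbc h]
  have htwo : 2 ≤ ((M ⊔ N.comap (swap b c)).connectedComponentMk '' S).ncard := by
    rw [← Set.ncard_pair fun h => hsep (ConnectedComponent.eq.1 h)]
    refine Set.ncard_le_ncard ?_ (Set.toFinite _)
    rintro _ (rfl | rfl)
    exacts [⟨a, by simp [S]⟩, ⟨b, by simp [S]⟩]
  have := card_connectedComponent_add_ncard_image_eq hagree
  omega

theorem exists_matchAdj_card_connectedComponent_lt (hM : IsPerfMatching M)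
    (hN : IsPerfMatching N) (h : M ≠ N) :
    ∃ N', ∃ _ : IsPerfMatching N', MatchAdj N N' ∧
      Nat.card (M ⊔ N).ConnectedComponent < Nat.card (M ⊔ N').ConnectedComponent := by
  obtain ⟨a, ha⟩ := hM.exists_partner_ne hN h
  exact ⟨_, hN.comap_equiv_s5 _,
    hN.matchAdj_comap_swap (hN.adj_partner a) (hN.adj_partner _) (hM.partner_ne a).symm ha.symm,
    hM.card_connectedComponent_sup_comap_swap hN (hM.adj_partner a) (hN.adj_partner a)
      (hN.adj_partner _) ha.symm⟩

end Switching

/-- Number the edges of `M` cyclically as `a i — f (a i)`, `i : Fin (k + 1)`, and join `f (a i)`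
to `a (i + 1)`: together with `M` this is a Hamiltonian cycle. -/
theorem exists_connected_sup [NeZero n] (hM : IsPerfMatching M) :
    ∃ N, IsPerfMatching N ∧ (M ⊔ N).Connected := by
  obtain ⟨k, ⟨e⟩⟩ : ∃ k, Nonempty (M.ConnectedComponent ≃ Fin (k + 1)) := by
    have : Nonempty M.ConnectedComponent := ⟨M.connectedComponentMk 0⟩
    have := Nat.card_pos (α := M.ConnectedComponent)
    exact ⟨_, ⟨(Finite.equivFin _).trans (finCongr (Nat.succ_pred_eq_of_pos this).symm)⟩⟩
  set f := hM.partner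
  let idx (v : Fin n) : Fin (k + 1) := e (M.connectedComponentMk v)
  let a (i : Fin (k + 1)) : Fin n := (e.symm i).out
  have mk_a (i) : M.connectedComponentMk (a i) = e.symm i := Quot.out_eq _
  have idx_a (i) : idx (a i) = i := by simp only [idx, mk_a, e.apply_symm_apply]
  have idx_partner (v) : idx (f v) = idx v :=
    congrArg e (ConnectedComponent.connectedComponentMk_eq_of_adj (hM.adj_partner v)).symm
  have mem_pair (v) : v = a (idx v) ∨ v = f (a (idx v)) := by
    refine hM.reachable_iff.1 (ConnectedComponent.eq.1 ?_)
    rw [mk_a, e.symm_apply_apply]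
  have a_ne_partner (i j) : a i ≠ f (a j) := fun h => by
    have := idx_a i
    rw [h, idx_partner, idx_a] at this
    subst this
    exact hM.partner_ne _ h.symm
  let g (v : Fin n) : Fin n := if v = a (idx v) then f (a (idx v - 1)) else a (idx v + 1)
  have g_a (i) : g (a i) = f (a (i - 1)) := by simp [g, idx_a]
  have g_partner (i) : g (f (a i)) = a (i + 1) := by
    simp [g, idx_partner, idx_a, (a_ne_partner i i).symm]
  have hg : Function.Involutive g := fun v => by
    rcases mem_pair v with h | h <;> rw [h] <;> simp [g_a, g_partner]
  have hfix (v) : g v ≠ v := by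
    rcases mem_pair v with h | h <;> rw [h]
    · rw [g_a]; exact (a_ne_partner _ _).symm
    · rw [g_partner]; exact a_ne_partner _ _
  let N := SimpleGraph.ofInvolution g hg hfix
  have reach_partner (v) : (M ⊔ N).Reachable v (f v) :=
    ((sup_adj _ _ _ _).2 (.inl (hM.adj_partner v))).reachable
  have from_zero := reachable_of_forall_reachable_add_one a fun i =>
    (reach_partner (a i)).trans ((sup_adj M N _ _).2 (.inr (g_partner i))).reachable
  have reach (v) : (M ⊔ N).Reachable (a 0) v := by
    rcases mem_pair v with h | h <;> rw [h]
    exacts [from_zero _, (from_zero _).trans (reach_partner _)]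
  exact ⟨N, .ofInvolution hg hfix,
    (connected_iff _).2 ⟨fun u v => (reach u).symm.trans (reach v), ⟨0⟩⟩⟩

end IsPerfMatching

namespace PMVertex

variable {m : ℕ}

instance : Nonempty (PMVertex m) :=
  ⟨⟨.ofInvolution Fin.rev Fin.rev_involutive fun v h => by
      rw [Fin.ext_iff, Fin.val_rev] at h
      omega, .ofInvolution _ _⟩⟩

noncomputable def unionComponents (M N : PMVertex m) : ℕ :=
  Nat.card (M.1 ⊔ N.1).ConnectedComponent

lemma unionComponents_le (M N : PMVertex m) : unionComponents M N ≤ m := by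
  have := M.2.two_mul_card_connectedComponent
  have := ConnectedComponent.card_le_card_of_le (le_sup_left : M.1 ≤ M.1 ⊔ N.1)
  rw [unionComponents]
  omega

lemma unionComponents_self (M : PMVertex m) : unionComponents M M = m := by
  have := M.2.two_mul_card_connectedComponent
  rw [unionComponents, sup_idem]
  omega

lemma one_le_unionComponents (hm : 1 ≤ m) (M N : PMVertex m) : 1 ≤ unionComponents M N :=
  have : Nonempty (Fin (2 * m)) := ⟨⟨0, by omega⟩⟩
  Nat.card_pos

lemma exists_unionComponents_eq_one (hm : 1 ≤ m) (M : PMVertex m) :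
    ∃ N, unionComponents M N = 1 := by
  have : NeZero (2 * m) := ⟨by omega⟩
  obtain ⟨N, hN, hconn⟩ := M.2.exists_connected_sup
  have := hconn.preconnected.subsingleton_connectedComponent
  exact ⟨⟨N, hN⟩, Nat.card_eq_one_iff_unique.2 ⟨this, inferInstance⟩⟩

lemma unionComponents_le_add_length (M : PMVertex m) {N N' : PMVertex m}
    (p : (matchingGraph m).Walk N N') :
    unionComponents M N ≤ unionComponents M N' + p.length := by
  induction p with
  | nil => simp
  | @cons X Y _ h _ ih =>
    have hstep : unionComponents M X ≤ unionComponents M Y + 1 :=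
      IsPerfMatching.card_connectedComponent_sup_le_add_one M.1 X.2 Y.2 h
    rw [Walk.length_cons]
    omega

theorem exists_walk_length_add_unionComponents_le (M N : PMVertex m) :
    ∃ p : (matchingGraph m).Walk N M, p.length + unionComponents M N ≤ m := by
  by_cases h : N = M
  · subst h
    exact ⟨.nil, by simp [unionComponents_self]⟩
  obtain ⟨N', hN', hadj, hlt⟩ :=
    M.2.exists_matchAdj_card_connectedComponent_lt N.2 fun h' => h (Subtype.ext h'.symm)
  have hlt : unionComponents M N < unionComponents M ⟨N', hN'⟩ := hlt
  obtain ⟨p, hp⟩ := exists_walk_length_add_unionComponents_le M ⟨N', hN'⟩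
  have hadj : (matchingGraph m).Adj N ⟨N', hN'⟩ := hadj
  refine ⟨.cons hadj p, ?_⟩
  rw [Walk.length_cons]
  omega
termination_by m - unionComponents M N
decreasing_by
  have := unionComponents_le M ⟨N', hN'⟩
  omega

theorem dist_add_unionComponents (M N : PMVertex m) :
    (matchingGraph m).dist M N + unionComponents M N = m := by
  obtain ⟨p, hp⟩ := exists_walk_length_add_unionComponents_le M N
  obtain ⟨q, hq⟩ := p.reverse.reachable.exists_walk_length_eq_dist
  have hle := dist_le p.reverse
  have hge := unionComponents_le_add_length M q
  rw [Walk.length_reverse] at hle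
  rw [unionComponents_self, hq] at hge
  omega

theorem connected_matchingGraph : (matchingGraph m).Connected :=
  (connected_iff _).2 ⟨fun M N =>
    (exists_walk_length_add_unionComponents_le N M).elim fun p _ => p.reachable, inferInstance⟩

end PMVertex

/-- The eccentricity of every vertex of `𝒫ₘ` is `m - 1`, and consequently the
diameter of `𝒫ₘ` is `m - 1`. -/
theorem stmt5 (m : ℕ) (hm : 1 ≤ m) :
    (∀ M : PMVertex m, (⨆ M' : PMVertex m, (matchingGraph m).dist M M') = m - 1) ∧
    (matchingGraph m).diam = m - 1 := by
  have dist_le (M N : PMVertex m) : (matchingGraph m).dist M N ≤ m - 1 := by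
    have := PMVertex.dist_add_unionComponents M N
    have := PMVertex.one_le_unionComponents hm M N
    omega
  have exists_dist_eq (M : PMVertex m) : ∃ N, (matchingGraph m).dist M N = m - 1 := by
    obtain ⟨N, hN⟩ := PMVertex.exists_unionComponents_eq_one hm M
    have := PMVertex.dist_add_unionComponents M N
    exact ⟨N, by omega⟩
  refine ⟨fun M => le_antisymm (ciSup_le (dist_le M)) ?_, le_antisymm ?_ ?_⟩
  · obtain ⟨N, hN⟩ := exists_dist_eq M
    exact hN ▸ le_ciSup ⟨m - 1, Set.forall_mem_range.2 (dist_le M)⟩ N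
  · obtain ⟨u, v, huv⟩ := (matchingGraph m).exists_dist_eq_diam
    exact huv ▸ dist_le u v
  · obtain ⟨N, hN⟩ := exists_dist_eq (Classical.arbitrary _)
    exact hN ▸ dist_le_diam (connected_iff_ediam_ne_top.1 PMVertex.connected_matchingGraph)
end
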